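/- arXiv:1004.4812 — 4 statements merged into one kernel-verified Lean document; each statement's English description precedes it below -/
import Mathlib

section
/- Let β > 1. There exists a constant δ > 0 such that for every function of the form g(x) = 1 + Σ_{k=1}^∞ (a_k − b_k) x^k, where (a_1, a_2, …) and (b_1, b_2, …) are sequences in S_β, and every x ∈ [0, 1/β], if |g(x)| < δ then g'(x) < −δ. -/
open Set MeasureTheory Filter Topology

noncomputable section

/-- The β-transformation `x ↦ βx mod 1`. -/
def fbeta (β : ℝ) (x : ℝ) : ℝ := Int.fract (β * x)

/-- The digit sequence `d(x, β)`, given by `d(x,β)_n = [β f_β^n(x)]`. -/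
def bdigit (β x : ℝ) (n : ℕ) : ℕ := (⌊β * (fbeta β)^[n] x⌋).toNat

/-- The β-shift `S_β`: the closure (product topology) of the set of digit sequences of
points of `[0,1)`. -/
def betaShift (β : ℝ) : Set (ℕ → ℕ) :=
  closure {d | ∃ x ∈ Set.Ico (0 : ℝ) 1, d = bdigit β x}

/-- `π_β ((i_k)) = ∑ i_k β^{-(k+1)}`. -/
def piBeta (β : ℝ) (d : ℕ → ℕ) : ℝ := ∑' k : ℕ, (d k : ℝ) / β ^ (k + 1)

/-- The finite word `w` occurs in the sequence `d` at position `m`. -/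
def occursAt (w : List ℕ) (d : ℕ → ℕ) (m : ℕ) : Prop :=
  ∀ i < w.length, d (m + i) = w.getD i 0

/-- The finite word `w` occurs somewhere in the sequence `d`. -/
def occursIn (w : List ℕ) (d : ℕ → ℕ) : Prop := ∃ m, occursAt w d m

/-- `w ∈ S_β^*`: the finite word `w` occurs in some sequence of `S_β`. -/
def wordIn (β : ℝ) (w : List ℕ) : Prop := ∃ d ∈ betaShift β, occursIn w d

/-- The finite word `w` occurs in some sequence of the set `S`. -/
def wordInSet (S : Set (ℕ → ℕ)) (w : List ℕ) : Prop := ∃ d ∈ S, occursIn w d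

/-- The cylinder `[w]` in `S_β`. -/
def cylinder (β : ℝ) (w : List ℕ) : Set (ℕ → ℕ) :=
  {d ∈ betaShift β | ∀ i < w.length, d i = w.getD i 0}

/-- A subshift of finite type inside `S_β`: the subset of `S_β` determined by a finite
set of forbidden words. -/
def IsSFTin (β : ℝ) (S : Set (ℕ → ℕ)) : Prop :=
  ∃ F : Finset (List ℕ), S = {d ∈ betaShift β | ∀ w ∈ F, ¬ occursIn w d}

/-- `S_β` is a subshift of finite type iff `d(1,β)` has only finitely many nonzero digits. -/
def betaShiftFiniteType (β : ℝ) : Prop := ∃ N, ∀ n ≥ N, bdigit β 1 n = 0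

/-- The length (Lebesgue measure) of a set of reals. -/
def len (I : Set ℝ) : ℝ := (volume I).toReal

/-- `I` is a (possibly degenerate) closed interval. -/
def IsClosedInterval (I : Set ℝ) : Prop := ∃ a b : ℝ, a ≤ b ∧ I = Set.Icc a b

/-- A legal move in Schmidt's game with ratio `ρ`: a closed subinterval `cur` of `prev`
with `|cur| ≥ ρ|prev|`. -/
def MoveLegal (ρ : ℝ) (prev cur : Set ℝ) : Prop :=
  IsClosedInterval cur ∧ cur ⊆ prev ∧ ρ * len prev ≤ len cur

/-- White has a winning strategy in Schmidt's `(α,γ)`-game on `[0,1]` with target set `E`: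
there is a strategy (a function from the history of Black's moves to White's next move)
such that, for every sequence of moves of Black starting with a closed interval
`B 0 ⊆ [0,1]`, White's moves are legal as long as Black's have been, and if Black always
moves legally then `⋂ k, W k ⊆ E`. -/
def WinsSchmidt (α γ : ℝ) (E : Set ℝ) : Prop :=
  ∃ strat : List (Set ℝ) → Set ℝ,
    ∀ B : ℕ → Set ℝ,
      (IsClosedInterval (B 0) ∧ B 0 ⊆ Set.Icc (0 : ℝ) 1) →
      (∀ n : ℕ,
        (∀ k < n, MoveLegal γ (strat (List.ofFn fun i : Fin (k + 1) => B i)) (B (k + 1))) →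
        MoveLegal α (B n) (strat (List.ofFn fun i : Fin (n + 1) => B i))) ∧
      ((∀ k : ℕ, MoveLegal γ (strat (List.ofFn fun i : Fin (k + 1) => B i)) (B (k + 1))) →
        (⋂ k : ℕ, strat (List.ofFn fun i : Fin (k + 1) => B i)) ⊆ E)

/-- `E` is `α`-winning: it is `(α,γ)`-winning for every `γ ∈ (0,1)`. -/
def AlphaWinning (α : ℝ) (E : Set ℝ) : Prop :=
  ∀ γ ∈ Set.Ioo (0 : ℝ) 1, WinsSchmidt α γ E

/-- A similarity transformation of `ℝ`. -/
def IsSimilarityMap (f : ℝ → ℝ) : Prop := ∃ a b : ℝ, a ≠ 0 ∧ ∀ x, f x = a * x + b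

/-- Falconer's class `𝒢^s`: `G_δ` sets `F` with `dim_H (⋂ i, f_i(F)) ≥ s` for every
sequence of similarity transformations `(f_i)`. -/
def FalconerClass (s : ℝ) (F : Set ℝ) : Prop :=
  IsGδ F ∧ ∀ f : ℕ → ℝ → ℝ, (∀ i, IsSimilarityMap (f i)) →
    ENNReal.ofReal s ≤ dimH (⋂ i, f i '' F)

/-- The suffix of `u` of length `m+1` coincides with the first `m+1` digits of `d(1,β)`. -/
def tailMatch (β : ℝ) (u : List ℕ) (m : ℕ) : Prop :=
  m < u.length ∧ ∀ t ≤ m, u.getD (u.length - 1 - m + t) 0 = bdigit β 1 t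

/-!
Write `g = 1 + A - B` with `A(x) = ∑ aₖ x^(k+1)` and `B(x) = ∑ bₖ x^(k+1)`. Digits in `S_β` are
`< β`, and the partial sums of `∑ bₖ β^-(k+1)` are at most `1` because they are partial
β-expansions of points of `[0,1)`; hence `B(x) ≤ βx ≤ 1` on `[0, 1/β]`. So `|g(x)| < δ ≤ 1/8`
forces `x ≥ 1/(2β)` and `A(x) < δ`. With `δ ≤ (2β)^-K` this kills the first `K` digits of `a`,
and then `∑ k aₖ x^(k+1)` is bounded by a tail of `∑ k β^-k`, which is `< 1/8` for `K` large.
Finally `x g'(x) = ∑ k (aₖ - bₖ) x^(k+1) + (g(x) - 1) < 1/8 + δ - 1`, so `g'(x) < -δ`.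
-/

lemma hasDerivAt_tsum_mul_pow_succ {c : ℕ → ℝ} {C : ℝ} (hc : ∀ k, |c k| ≤ C) {x : ℝ}
    (hx : |x| < 1) :
    HasDerivAt (fun t => ∑' k, c k * t ^ (k + 1)) (∑' k, c k * ((k + 1) * x ^ k)) x := by
  obtain ⟨r, hxr, hr1⟩ := exists_between hx
  have hr0 : 0 < r := (abs_nonneg x).trans_lt hxr
  have hsum : Summable fun k : ℕ => C * ((k + 1) * r ^ k) := by
    have h := summable_pow_mul_geometric_of_norm_lt_one (R := ℝ) 1
      (by rwa [Real.norm_of_nonneg hr0.le])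
    simp only [pow_one] at h
    exact ((h.add (summable_geometric_of_lt_one hr0.le hr1)).mul_left C).congr fun k => by ring
  refine hasDerivAt_tsum_of_isPreconnected (g := fun k t => c k * t ^ (k + 1))
    (g' := fun k t => c k * ((k + 1) * t ^ k)) hsum isOpen_Ioo isPreconnected_Ioo
    (fun k t _ => ?_) (fun k t ht => ?_) (y₀ := 0) ⟨by linarith, hr0⟩ ?_ (abs_lt.mp hxr)
  · simpa [add_comm] using (hasDerivAt_pow (k + 1) t).const_mul (c k)
  · have ht' : |t| ≤ r := (abs_lt.mpr ht).le
    rw [Real.norm_eq_abs, abs_mul, abs_mul, abs_pow,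
      abs_of_nonneg (by positivity : (0 : ℝ) ≤ k + 1)]
    exact mul_le_mul (hc k) (by gcongr) (by positivity) ((abs_nonneg _).trans (hc 0))
  · simp

namespace BetaShift

variable {β x : ℝ} {a b : ℕ → ℕ}

lemma iterate_fbeta_mem_Ico (hx : x ∈ Ico (0 : ℝ) 1) (n : ℕ) :
    (fbeta β)^[n] x ∈ Ico (0 : ℝ) 1 := by
  cases n with
  | zero => exact hx
  | succ n =>
    rw [Function.iterate_succ_apply']
    exact ⟨Int.fract_nonneg _, Int.fract_lt_one _⟩

lemma bdigit_cast (hβ : 0 ≤ β) (hx : x ∈ Ico (0 : ℝ) 1) (n : ℕ) :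
    (bdigit β x n : ℝ) = ⌊β * (fbeta β)^[n] x⌋ := by
  have hfloor : 0 ≤ ⌊β * (fbeta β)^[n] x⌋ :=
    Int.floor_nonneg.mpr (mul_nonneg hβ (iterate_fbeta_mem_Ico hx n).1)
  rw [bdigit, ← Int.cast_natCast, Int.toNat_of_nonneg hfloor]

lemma bdigit_lt (hβ : 0 < β) (hx : x ∈ Ico (0 : ℝ) 1) (n : ℕ) : (bdigit β x n : ℝ) < β := by
  have hfn := iterate_fbeta_mem_Ico (β := β) hx n
  rw [bdigit_cast hβ.le hx]
  calc (⌊β * (fbeta β)^[n] x⌋ : ℝ) ≤ β * (fbeta β)^[n] x := Int.floor_le _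
    _ < β := mul_lt_of_lt_one_right hβ hfn.2

lemma sum_range_bdigit_div_pow (hβ : 0 < β) (hx : x ∈ Ico (0 : ℝ) 1) (n : ℕ) :
    ∑ k ∈ Finset.range n, (bdigit β x k : ℝ) / β ^ (k + 1) = x - (fbeta β)^[n] x / β ^ n := by
  induction n with
  | zero => simp
  | succ n ih =>
    rw [Finset.sum_range_succ, ih, bdigit_cast hβ.le hx, Function.iterate_succ_apply', fbeta,
      Int.fract]
    field_simp
    ring

lemma sum_range_bdigit_div_pow_le_one (hβ : 0 < β) (hx : x ∈ Ico (0 : ℝ) 1) (n : ℕ) :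
    ∑ k ∈ Finset.range n, (bdigit β x k : ℝ) / β ^ (k + 1) ≤ 1 := by
  have := (iterate_fbeta_mem_Ico (β := β) hx n).1
  rw [sum_range_bdigit_div_pow hβ hx]
  linarith [hx.2, div_nonneg this (pow_pos hβ n).le]

lemma exists_bdigit_eqOn_of_mem_betaShift (ha : a ∈ betaShift β) (n : ℕ) :
    ∃ x ∈ Ico (0 : ℝ) 1, ∀ k < n, a k = bdigit β x k := by
  have hU : IsOpen ((Iio n).pi fun k => {a k}) :=
    isOpen_set_pi (finite_Iio n) fun k _ => isOpen_discrete _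
  obtain ⟨_, hd, x, hx, rfl⟩ := mem_closure_iff.mp ha _ hU fun k _ => rfl
  exact ⟨x, hx, fun k hk => (hd k hk).symm⟩

lemma digit_lt_of_mem_betaShift (hβ : 0 < β) (ha : a ∈ betaShift β) (k : ℕ) :
    (a k : ℝ) < β := by
  obtain ⟨x, hx, h⟩ := exists_bdigit_eqOn_of_mem_betaShift ha (k + 1)
  rw [h k k.lt_succ_self]
  exact bdigit_lt hβ hx k

lemma summable_nat_mul_inv_pow (hβ : 1 < β) : Summable fun k : ℕ => (k : ℝ) * β⁻¹ ^ k := by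
  have h := summable_pow_mul_geometric_of_norm_lt_one (R := ℝ) 1
    (r := β⁻¹) (by rw [norm_inv, Real.norm_of_nonneg (by linarith)]; exact inv_lt_one_of_one_lt₀ hβ)
  simpa only [pow_one] using h

lemma digit_mul_pow_le (hβ : 0 < β) (ha : ∀ k, (a k : ℝ) ≤ β) (hx : x ∈ Icc 0 β⁻¹) (k : ℕ) :
    (a k : ℝ) * x ^ (k + 1) ≤ β⁻¹ ^ k :=
  calc (a k : ℝ) * x ^ (k + 1) ≤ β * β⁻¹ ^ (k + 1) :=
        mul_le_mul (ha k) (pow_le_pow_left₀ hx.1 hx.2 _) (pow_nonneg hx.1 _) hβ.le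
    _ = β⁻¹ ^ k := by rw [pow_succ', ← mul_assoc, mul_inv_cancel₀ hβ.ne', one_mul]

lemma summable_digit_mul_pow (hβ : 1 < β) (ha : ∀ k, (a k : ℝ) ≤ β) (hx : x ∈ Icc 0 β⁻¹) :
    Summable fun k => (a k : ℝ) * x ^ (k + 1) :=
  .of_nonneg_of_le (fun k => mul_nonneg (Nat.cast_nonneg _) (pow_nonneg hx.1 _))
    (digit_mul_pow_le (by linarith) ha hx)
    (summable_geometric_of_lt_one (by positivity) (inv_lt_one_of_one_lt₀ hβ))

lemma summable_nat_mul_digit_mul_pow (hβ : 1 < β) (ha : ∀ k, (a k : ℝ) ≤ β)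
    (hx : x ∈ Icc 0 β⁻¹) : Summable fun k : ℕ => (k : ℝ) * a k * x ^ (k + 1) :=
  .of_nonneg_of_le (fun k => mul_nonneg (by positivity : (0 : ℝ) ≤ k * a k) (pow_nonneg hx.1 _))
    (fun k => by
      rw [mul_assoc]
      exact mul_le_mul_of_nonneg_left (digit_mul_pow_le (by linarith) ha hx k) k.cast_nonneg)
    (summable_nat_mul_inv_pow hβ)

lemma tsum_digit_mul_pow_le (hβ : 0 < β) (ha : a ∈ betaShift β) (hx : x ∈ Icc 0 β⁻¹) :
    ∑' k, (a k : ℝ) * x ^ (k + 1) ≤ β * x := by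
  refine Real.tsum_le_of_sum_range_le (fun k => mul_nonneg (a k).cast_nonneg (pow_nonneg hx.1 _))
    fun n => ?_
  obtain ⟨y, hy, hay⟩ := exists_bdigit_eqOn_of_mem_betaShift ha n
  have hterm : ∀ k, (bdigit β y k : ℝ) * x ^ (k + 1) ≤
      β * x * ((bdigit β y k : ℝ) / β ^ (k + 1)) := by
    intro k
    have hxk : x ^ (k + 1) ≤ β * x / β ^ (k + 1) := by
      rw [show β * x / β ^ (k + 1) = x * β⁻¹ ^ k by rw [pow_succ', inv_pow]; field_simp,
        pow_succ']
      exact mul_le_mul_of_nonneg_left (pow_le_pow_left₀ hx.1 hx.2 k) hx.1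
    calc (bdigit β y k : ℝ) * x ^ (k + 1) ≤ bdigit β y k * (β * x / β ^ (k + 1)) :=
          mul_le_mul_of_nonneg_left hxk (Nat.cast_nonneg _)
      _ = β * x * ((bdigit β y k : ℝ) / β ^ (k + 1)) := by ring
  calc ∑ k ∈ Finset.range n, (a k : ℝ) * x ^ (k + 1)
      = ∑ k ∈ Finset.range n, (bdigit β y k : ℝ) * x ^ (k + 1) :=
        Finset.sum_congr rfl fun k hk => by rw [hay k (Finset.mem_range.mp hk)]
    _ ≤ β * x * ∑ k ∈ Finset.range n, (bdigit β y k : ℝ) / β ^ (k + 1) := by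
        rw [Finset.mul_sum]; exact Finset.sum_le_sum fun k _ => hterm k
    _ ≤ β * x := mul_le_of_le_one_right (mul_nonneg hβ.le hx.1)
        (sum_range_bdigit_div_pow_le_one hβ hy n)

lemma digit_eq_zero_of_tsum_lt (hx0 : 0 ≤ x) (hx1 : x ≤ 1)
    (hs : Summable fun k => (a k : ℝ) * x ^ (k + 1)) {K : ℕ}
    (h : ∑' k, (a k : ℝ) * x ^ (k + 1) < x ^ K) : ∀ k < K, a k = 0 := by
  intro k hk
  by_contra hne
  have hone : (1 : ℝ) ≤ a k := by exact_mod_cast Nat.one_le_iff_ne_zero.mpr hne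
  have := calc x ^ K ≤ x ^ (k + 1) := pow_le_pow_of_le_one hx0 hx1 hk
    _ ≤ a k * x ^ (k + 1) := le_mul_of_one_le_left (pow_nonneg hx0 _) hone
    _ ≤ ∑' k, (a k : ℝ) * x ^ (k + 1) :=
        hs.le_tsum k fun j _ => mul_nonneg (a j).cast_nonneg (pow_nonneg hx0 _)
  linarith

lemma tsum_nat_mul_digit_mul_pow_le (hβ : 1 < β) (ha : ∀ k, (a k : ℝ) ≤ β)
    (hx : x ∈ Icc 0 β⁻¹) {K : ℕ} (hK : ∀ k < K, a k = 0) :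
    ∑' k : ℕ, (k : ℝ) * a k * x ^ (k + 1) ≤ ∑' l : ℕ, ((l + K : ℕ) : ℝ) * β⁻¹ ^ (l + K) := by
  have hs := summable_nat_mul_digit_mul_pow hβ ha hx
  rw [← hs.sum_add_tsum_nat_add K,
    Finset.sum_eq_zero fun k hk => by simp [hK k (Finset.mem_range.mp hk)], zero_add]
  refine Summable.tsum_le_tsum (fun l => ?_) ((summable_nat_add_iff K).mpr hs)
    ((summable_nat_add_iff K).mpr (summable_nat_mul_inv_pow hβ))
  rw [mul_assoc]
  exact mul_le_mul_of_nonneg_left (digit_mul_pow_le (by linarith) ha hx _) (Nat.cast_nonneg _)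

lemma mul_deriv_one_add_tsum_le (hβ : 1 < β) (ha : ∀ k, (a k : ℝ) ≤ β) (hb : ∀ k, (b k : ℝ) ≤ β)
    (hx : x ∈ Icc 0 β⁻¹) :
    x * deriv (fun t : ℝ => 1 + ∑' k : ℕ, ((a k : ℝ) - (b k : ℝ)) * t ^ (k + 1)) x ≤
      ∑' k : ℕ, (k : ℝ) * a k * x ^ (k + 1) + ∑' k : ℕ, ((a k : ℝ) - (b k : ℝ)) * x ^ (k + 1) := by
  have hx1 : |x| < 1 := by
    rw [abs_of_nonneg hx.1]; exact hx.2.trans_lt (inv_lt_one_of_one_lt₀ hβ)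
  have hc : ∀ k, |(a k : ℝ) - b k| ≤ β := fun k =>
    abs_sub_le_iff.mpr ⟨by linarith [ha k, (b k).cast_nonneg' (α := ℝ)],
      by linarith [hb k, (a k).cast_nonneg' (α := ℝ)]⟩
  have hsA := summable_nat_mul_digit_mul_pow hβ ha hx
  have hsB := summable_nat_mul_digit_mul_pow hβ hb hx
  have hsC : Summable fun k => ((a k : ℝ) - b k) * x ^ (k + 1) :=
    ((summable_digit_mul_pow hβ ha hx).sub (summable_digit_mul_pow hβ hb hx)).congr
      fun k => (sub_mul _ _ _).symm
  have hsD : Summable fun k => x * (((a k : ℝ) - b k) * ((k + 1) * x ^ k)) :=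
    ((hsA.sub hsB).add hsC).congr fun k => by ring
  rw [((hasDerivAt_tsum_mul_pow_succ hc hx1).const_add 1).deriv, ← tsum_mul_left,
    ← hsA.tsum_add hsC]
  refine hsD.tsum_le_tsum (fun k => ?_) (hsA.add hsC)
  have hbk : 0 ≤ (k : ℝ) * b k * x ^ (k + 1) :=
    mul_nonneg (by positivity) (pow_nonneg hx.1 _)
  calc x * (((a k : ℝ) - b k) * ((k + 1) * x ^ k))
      = (k * a k * x ^ (k + 1) + ((a k : ℝ) - b k) * x ^ (k + 1)) - k * b k * x ^ (k + 1) := by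
        ring
    _ ≤ _ := sub_le_self _ hbk

lemma inv_two_mul_le_and_tsum_lt_of_abs_lt (hβ : 1 < β) (ha : ∀ k, (a k : ℝ) ≤ β)
    (hb : b ∈ betaShift β) (hx : x ∈ Icc 0 β⁻¹) {δ : ℝ} (hδ : δ ≤ 1 / 8)
    (hg : |1 + ∑' k : ℕ, ((a k : ℝ) - (b k : ℝ)) * x ^ (k + 1)| < δ) :
    (2 * β)⁻¹ ≤ x ∧ ∑' k, (a k : ℝ) * x ^ (k + 1) < δ := by
  have hβ0 : 0 < β := by linarith
  have hbβ : ∀ k, (b k : ℝ) ≤ β := fun k => (digit_lt_of_mem_betaShift hβ0 hb k).le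
  have hsplit : ∑' k : ℕ, ((a k : ℝ) - (b k : ℝ)) * x ^ (k + 1) =
      ∑' k, (a k : ℝ) * x ^ (k + 1) - ∑' k, (b k : ℝ) * x ^ (k + 1) := by
    rw [← (summable_digit_mul_pow hβ ha hx).tsum_sub (summable_digit_mul_pow hβ hbβ hx)]
    simp only [sub_mul]
  have hA : 0 ≤ ∑' k, (a k : ℝ) * x ^ (k + 1) :=
    tsum_nonneg fun k => mul_nonneg (a k).cast_nonneg (pow_nonneg hx.1 _)
  have hB := tsum_digit_mul_pow_le hβ0 hb hx
  have hβx : β * x ≤ 1 := by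
    have := mul_le_mul_of_nonneg_left hx.2 hβ0.le
    rwa [mul_inv_cancel₀ hβ0.ne'] at this
  have hg' := abs_lt.mp hg
  rw [hsplit] at hg'
  refine ⟨?_, by linarith⟩
  rw [inv_le_iff_one_le_mul₀ (by positivity)]
  nlinarith

end BetaShift

open BetaShift

/-- improved transversality lemma: for `β > 1` there is `δ > 0` such
that for every `g(x) = 1 + ∑ (a_k - b_k) x^k` with `a, b ∈ S_β` and every
`x ∈ [0, 1/β]`, if `|g(x)| < δ` then `g'(x) < -δ`. -/
theorem improved_transversality (β : ℝ) (hβ : 1 < β) :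
    ∃ δ > 0, ∀ a b : ℕ → ℕ, a ∈ betaShift β → b ∈ betaShift β →
      ∀ x ∈ Set.Icc (0 : ℝ) (1 / β),
        |1 + ∑' k : ℕ, ((a k : ℝ) - (b k : ℝ)) * x ^ (k + 1)| < δ →
          deriv (fun t : ℝ => 1 + ∑' k : ℕ, ((a k : ℝ) - (b k : ℝ)) * t ^ (k + 1)) x < -δ := by
  have hβ0 : 0 < β := by linarith
  obtain ⟨K, hK⟩ : ∃ K : ℕ, ∑' l : ℕ, ((l + K : ℕ) : ℝ) * β⁻¹ ^ (l + K) < 1 / 8 :=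
    ((tendsto_order.1 (tendsto_sum_nat_add fun k : ℕ => (k : ℝ) * β⁻¹ ^ k)).2 _
      (by norm_num)).exists
  set δ := min (1 / 8) ((2 * β)⁻¹ ^ K)
  refine ⟨δ, by positivity, fun a b ha hb x hx hg => ?_⟩
  rw [one_div] at hx
  have haβ : ∀ k, (a k : ℝ) ≤ β := fun k => (digit_lt_of_mem_betaShift hβ0 ha k).le
  have hbβ : ∀ k, (b k : ℝ) ≤ β := fun k => (digit_lt_of_mem_betaShift hβ0 hb k).le
  have hx1 : x ≤ 1 := hx.2.trans (inv_le_one_of_one_le₀ hβ.le)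
  obtain ⟨hx_ge, hA⟩ := inv_two_mul_le_and_tsum_lt_of_abs_lt hβ haβ hb hx (min_le_left _ _) hg
  have ha0 : ∀ k < K, a k = 0 := digit_eq_zero_of_tsum_lt hx.1 hx1
    (summable_digit_mul_pow hβ haβ hx)
    (hA.trans_le ((min_le_right _ _).trans (pow_le_pow_left₀ (by positivity) hx_ge K)))
  have hkA := (tsum_nat_mul_digit_mul_pow_le hβ haβ hx ha0).trans_lt hK
  have hxD := mul_deriv_one_add_tsum_le hβ haβ hbβ hx
  have hg' := (abs_lt.mp hg).2
  have hδ : δ ≤ 1 / 8 := min_le_left _ _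
  by_contra! hD
  have hxδ : x * δ ≤ δ := mul_le_of_le_one_left (by positivity) hx1
  linarith [mul_le_mul_of_nonneg_left hD hx.1]
end
end

section
/- If E_i ⊆ [0,1] is α-winning for each i = 1, 2, 3, …, then the countable intersection ⋂_{i=1}^∞ E_i is also α-winning. -/
open Set MeasureTheory Filter Topology

noncomputable section

/-! White plays the games for all the `E i` at once, interleaved: step `n` of the real game is a
move of game `i = v₂(n + 1)`. Consecutive moves of game `i` lie `2 ^ (i + 1)` steps apart, so in
game `i` Black's reply shrinks White's interval by a factor at least
`γ (α γ) ^ (2 ^ (i + 1) - 1)`. White wins each of these games since `E i` is `α`-winning, and the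
intersection of all of White's intervals lies in each of them. -/

lemma padicValNat_two_pow_mul_odd (i k : ℕ) : padicValNat 2 (2 ^ i * (2 * k + 1)) = i := by
  rw [padicValNat.mul (by positivity) (by omega), padicValNat.prime_pow,
    padicValNat.eq_zero_of_not_dvd (by omega), add_zero]

lemma bijective_two_pow_mul_odd_sub_one :
    Function.Bijective fun p : ℕ × ℕ => 2 ^ p.1 * (2 * p.2 + 1) - 1 := by
  have hpos : ∀ i k : ℕ, 0 < 2 ^ i * (2 * k + 1) := fun _ _ => by positivity
  refine ⟨fun ⟨i, k⟩ ⟨j, l⟩ hij => ?_, fun n => ?_⟩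
  · have h : 2 ^ i * (2 * k + 1) = 2 ^ j * (2 * l + 1) := by
      have := hpos i k; have := hpos j l; simp only at hij; omega
    obtain rfl : i = j := by
      simpa only [padicValNat_two_pow_mul_odd] using congrArg (padicValNat 2) h
    have := Nat.eq_of_mul_eq_mul_left (by positivity) h
    simp only [Prod.mk.injEq, true_and]; omega
  · obtain ⟨i, m, ⟨k, rfl⟩, hn⟩ := Nat.exists_eq_two_pow_mul_odd n.succ_ne_zero
    exact ⟨(i, k), by simp only; omega⟩

/-- `schedule (i, k)` is the step of the real game at which game `i` makes its `k`-th move. -/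
def schedule : ℕ × ℕ ≃ ℕ := Equiv.ofBijective _ bijective_two_pow_mul_odd_sub_one

lemma schedule_add_one (i k : ℕ) : schedule (i, k) + 1 = 2 ^ i * (2 * k + 1) := by
  have : 0 < 2 ^ i * (2 * k + 1) := by positivity
  show 2 ^ i * (2 * k + 1) - 1 + 1 = _
  omega

lemma schedule_succ (i k : ℕ) : schedule (i, k + 1) = schedule (i, k) + 2 ^ (i + 1) := by
  have : schedule (i, k + 1) + 1 = schedule (i, k) + 1 + 2 ^ (i + 1) := by
    rw [schedule_add_one, schedule_add_one]; ring
  omega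

lemma schedule_mono (i : ℕ) : Monotone fun k => schedule (i, k) :=
  monotone_nat_of_le_succ fun k => (schedule_succ i k).symm ▸ Nat.le_add_right _ _

def respond (strat : List (Set ℝ) → Set ℝ) (B : ℕ → Set ℝ) (n : ℕ) : Set ℝ :=
  strat (List.ofFn fun i : Fin (n + 1) => B i)

lemma winsSchmidt_iff (α γ : ℝ) (E : Set ℝ) :
    WinsSchmidt α γ E ↔ ∃ strat : List (Set ℝ) → Set ℝ, ∀ B : ℕ → Set ℝ,
      (IsClosedInterval (B 0) ∧ B 0 ⊆ Icc 0 1) →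
      (∀ n, (∀ k < n, MoveLegal γ (respond strat B k) (B (k + 1))) →
        MoveLegal α (B n) (respond strat B n)) ∧
      ((∀ k, MoveLegal γ (respond strat B k) (B (k + 1))) → ⋂ k, respond strat B k ⊆ E) :=
  Iff.rfl

def interleave (strat : ℕ → List (Set ℝ) → Set ℝ) (l : List (Set ℝ)) : Set ℝ :=
  let p := schedule.symm (l.length - 1)
  strat p.1 (List.ofFn fun j : Fin (p.2 + 1) => l.getD (schedule (p.1, j)) ∅)

lemma respond_interleave_schedule (strat : ℕ → List (Set ℝ) → Set ℝ) (B : ℕ → Set ℝ) (i k : ℕ) :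
    respond (interleave strat) B (schedule (i, k)) =
      respond (strat i) (fun j => B (schedule (i, j))) k := by
  simp only [respond, interleave, List.length_ofFn, Nat.add_sub_cancel, Equiv.symm_apply_apply]
  congr 2; funext j
  have hj : schedule (i, j) < schedule (i, k) + 1 :=
    Nat.lt_succ_of_le (schedule_mono i (Nat.lt_succ_iff.mp j.isLt))
  rw [List.getD_eq_getElem _ _ (by simpa using hj), List.getElem_ofFn]
  rfl

lemma MoveLegal.trans {ρ σ : ℝ} {A B C : Set ℝ} (hAB : MoveLegal ρ A B) (hBC : MoveLegal σ B C)
    (hσ : 0 ≤ σ) : MoveLegal (σ * ρ) A C :=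
  ⟨hBC.1, hBC.2.1.trans hAB.2.1, by
    rw [mul_assoc]; exact (mul_le_mul_of_nonneg_left hAB.2.2 hσ).trans hBC.2.2⟩

def LegalRounds (α γ : ℝ) (B W : ℕ → Set ℝ) (N : ℕ) : Prop :=
  ∀ k < N, MoveLegal α (B k) (W k) ∧ MoveLegal γ (W k) (B (k + 1))

namespace LegalRounds

variable {α γ : ℝ} {B W : ℕ → Set ℝ} {N : ℕ}

lemma start (h : LegalRounds α γ B W N) (h0 : IsClosedInterval (B 0) ∧ B 0 ⊆ Icc 0 1) :
    ∀ m ≤ N, IsClosedInterval (B m) ∧ B m ⊆ Icc 0 1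
  | 0, _ => h0
  | m + 1, hm =>
    have hleg := h m hm
    ⟨hleg.2.1, hleg.2.2.1.trans (hleg.1.2.1.trans (h.start h0 m (by omega)).2)⟩

lemma moveLegal_pow (h : LegalRounds α γ B W N) (hα : 0 ≤ α) (hγ : 0 ≤ γ) (a : ℕ) :
    ∀ d, a + d < N → MoveLegal (γ * (α * γ) ^ d) (W a) (B (a + d + 1))
  | 0, hd => by simpa using (h a hd).2
  | d + 1, hd => by
    have hW := (h.moveLegal_pow hα hγ a d (by omega)).trans (h (a + d + 1) hd).1 hα
    rw [show a + (d + 1) + 1 = a + d + 1 + 1 from rfl]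
    convert hW.trans (h (a + d + 1) hd).2 hγ using 1
    ring

lemma moveLegal_schedule (h : LegalRounds α γ B W N) (hα : 0 ≤ α) (hγ : 0 ≤ γ) {i k : ℕ}
    (hk : schedule (i, k + 1) ≤ N) :
    MoveLegal (γ * (α * γ) ^ (2 ^ (i + 1) - 1)) (W (schedule (i, k)))
      (B (schedule (i, k + 1))) := by
  have hsucc : schedule (i, k + 1) = schedule (i, k) + (2 ^ (i + 1) - 1) + 1 := by
    have := schedule_succ i k; have : 1 ≤ 2 ^ (i + 1) := Nat.one_le_two_pow; omega
  rw [hsucc] at hk ⊢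
  exact h.moveLegal_pow hα hγ _ _ hk

end LegalRounds

theorem winsSchmidt_iInter {α γ : ℝ} (hα : 0 ≤ α) (hγ : 0 ≤ γ) {E : ℕ → Set ℝ}
    (h : ∀ i, WinsSchmidt α (γ * (α * γ) ^ (2 ^ (i + 1) - 1)) (E i)) :
    WinsSchmidt α γ (⋂ i, E i) := by
  simp only [winsSchmidt_iff] at h ⊢
  choose strat hstrat using h
  refine ⟨interleave strat, fun B hB0 => ?_⟩
  set W := respond (interleave strat) B
  have hsubgame : ∀ i k, W (schedule (i, k)) = respond (strat i) (fun j => B (schedule (i, j))) k :=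
    respond_interleave_schedule strat B
  have white_legal : ∀ n, (∀ k < n, MoveLegal γ (W k) (B (k + 1))) → MoveLegal α (B n) (W n) := by
    intro n
    induction n using Nat.strong_induction_on with
    | _ n ih =>
      intro hblack
      have hn : LegalRounds α γ B W n := fun k hk =>
        ⟨ih k hk fun l hl => hblack l (by omega), hblack k hk⟩
      obtain ⟨⟨i, k⟩, rfl⟩ := schedule.surjective n
      rw [hsubgame]
      have hstart := hn.start hB0 (schedule (i, 0)) (schedule_mono i (Nat.zero_le k))
      refine (hstrat i (fun j => B (schedule (i, j))) hstart).1 k fun l hl => ?_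
      rw [← hsubgame]
      exact hn.moveLegal_schedule hα hγ (schedule_mono i hl)
  refine ⟨white_legal, fun hblack x hx => mem_iInter.2 fun i => ?_⟩
  have hall : ∀ N, LegalRounds α γ B W N := fun N k _ =>
    ⟨white_legal k fun l _ => hblack l, hblack k⟩
  refine (hstrat i (fun j => B (schedule (i, j))) ((hall _).start hB0 _ le_rfl)).2 (fun k => ?_) ?_
  · rw [← hsubgame]
    exact (hall _).moveLegal_schedule hα hγ le_rfl
  · exact mem_iInter.2 fun k => hsubgame i k ▸ mem_iInter.1 hx _

theorem winning_countable_inter_general (α : ℝ) (hα : 0 < α) (hα1 : α < 1)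
    (E : ℕ → Set ℝ)
    (h : ∀ i, AlphaWinning α (E i)) : AlphaWinning α (⋂ i, E i) := by
  rintro γ ⟨hγ0, hγ1⟩
  refine winsSchmidt_iInter hα.le hγ0.le fun i => h i _ ⟨by positivity, ?_⟩
  calc γ * (α * γ) ^ (2 ^ (i + 1) - 1) ≤ γ * 1 := by
        gcongr; exact pow_le_one₀ (by positivity) (by nlinarith)
    _ < 1 := by linarith

/-- a countable intersection of `α`-winning subsets of `[0,1]` is
`α`-winning. -/
theorem winning_countable_inter (α : ℝ) (hα : 0 < α) (hα1 : α < 1)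
    (E : ℕ → Set ℝ) (hE : ∀ i, E i ⊆ Set.Icc (0 : ℝ) 1)
    (h : ∀ i, AlphaWinning α (E i)) : AlphaWinning α (⋂ i, E i) :=
  winning_countable_inter_general α hα hα1 E h
end
end

section
/- Let β > 1 and let i_1 … i_n be a finite word in S_β^* such that i_1 … i_n j_1 … j_m ∈ S_β^* for every finite word j_1 … j_m ∈ S_β^*. Then |π_β([i_1 … i_n])| = β^{−n}, and moreover |π_β([i_1 … i_n j_1 … j_m])| = β^{−n} · |π_β([j_1 … j_m])| for every finite word j_1 … j_m ∈ S_β^*. -/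
open Set MeasureTheory Filter Topology

noncomputable section

/-!
Shifting by `|w|` maps `[w v]` onto `[v]`. The inclusion `⊇` is where the hypothesis enters:
for `d ∈ S_β`, every prefix of the sequence `w d` is a prefix of a word `w u` with `u ∈ S_β^*`,
so `w d` lies in the closed set `S_β`. Since `π_β(w d) = π_β(w 0^∞) + β^{-|w|} π_β(d)`, the set
`π_β([w v])` is therefore an affine image of `π_β([v])` with ratio `β^{-|w|}`. For `v` empty this
reduces the first claim to `|π_β(S_β)| = 1`, which holds as `[0, 1) ⊆ π_β(S_β) ⊆ [0, 1]`, the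
upper bound because `π_β` is continuous on sequences with bounded digits.
-/

section Digits

lemma iterate_fbeta_mem_Ico (β : ℝ) {x : ℝ} (hx : x ∈ Ico (0 : ℝ) 1) (n : ℕ) :
    (fbeta β)^[n] x ∈ Ico (0 : ℝ) 1 := by
  cases n with
  | zero => exact hx
  | succ n =>
    rw [Function.iterate_succ_apply']
    exact ⟨Int.fract_nonneg _, Int.fract_lt_one _⟩

variable {β : ℝ}

lemma bdigit_add (x : ℝ) (m n : ℕ) : bdigit β x (n + m) = bdigit β ((fbeta β)^[m] x) n := by
  rw [bdigit, bdigit, Function.iterate_add_apply]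

lemma cast_bdigit (hβ : 0 ≤ β) {x : ℝ} (hx : x ∈ Ico (0 : ℝ) 1) (n : ℕ) :
    (bdigit β x n : ℝ) = ⌊β * (fbeta β)^[n] x⌋ := by
  have hfloor := Int.floor_nonneg.2 (mul_nonneg hβ (iterate_fbeta_mem_Ico β hx n).1)
  rw [bdigit, ← Int.cast_natCast, Int.toNat_of_nonneg hfloor]

lemma bdigit_le_floor (hβ : 0 ≤ β) {x : ℝ} (hx : x ∈ Ico (0 : ℝ) 1) (n : ℕ) :
    bdigit β x n ≤ ⌊β⌋₊ := by
  refine Nat.le_floor ?_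
  calc (bdigit β x n : ℝ) = ⌊β * (fbeta β)^[n] x⌋ := cast_bdigit hβ hx n
    _ ≤ β * (fbeta β)^[n] x := Int.floor_le _
    _ ≤ β * 1 := by gcongr; exact (iterate_fbeta_mem_Ico β hx n).2.le
    _ = β := mul_one β

lemma sum_bdigit_div_pow (hβ : 0 < β) {x : ℝ} (hx : x ∈ Ico (0 : ℝ) 1) (n : ℕ) :
    ∑ k ∈ Finset.range n, (bdigit β x k : ℝ) / β ^ (k + 1) = x - (fbeta β)^[n] x / β ^ n := by
  induction n with
  | zero => simp
  | succ n ih =>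
    have hnext : (fbeta β)^[n + 1] x = β * (fbeta β)^[n] x - ⌊β * (fbeta β)^[n] x⌋ := by
      rw [Function.iterate_succ_apply', fbeta, Int.fract]
    rw [Finset.sum_range_succ, ih, hnext, cast_bdigit hβ.le hx]
    field_simp
    ring

lemma hasSum_bdigit_div_pow (hβ : 1 < β) {x : ℝ} (hx : x ∈ Ico (0 : ℝ) 1) :
    HasSum (fun k => (bdigit β x k : ℝ) / β ^ (k + 1)) x := by
  have hβ0 : 0 < β := one_pos.trans hβ
  rw [hasSum_iff_tendsto_nat_of_nonneg (fun k => by positivity)]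
  simp_rw [sum_bdigit_div_pow hβ0 hx]
  have hremainder : Tendsto (fun n => (fbeta β)^[n] x / β ^ n) atTop (𝓝 0) := by
    refine squeeze_zero (fun n => div_nonneg (iterate_fbeta_mem_Ico β hx n).1 (by positivity))
      (fun n => ?_) (tendsto_pow_atTop_nhds_zero_of_lt_one (by positivity)
        (inv_lt_one_of_one_lt₀ hβ))
    rw [inv_pow, ← one_div]
    gcongr
    exact (iterate_fbeta_mem_Ico β hx n).2.le
  simpa using tendsto_const_nhds.sub hremainder

lemma piBeta_bdigit (hβ : 1 < β) {x : ℝ} (hx : x ∈ Ico (0 : ℝ) 1) :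
    piBeta β (bdigit β x) = x :=
  (hasSum_bdigit_div_pow hβ hx).tsum_eq

end Digits

section Shift

variable {β : ℝ}

lemma betaShift_subset_digits_le (hβ : 0 ≤ β) :
    betaShift β ⊆ {d | ∀ n, d n ≤ ⌊β⌋₊} := by
  have hclosed : IsClosed {d : ℕ → ℕ | ∀ n, d n ≤ ⌊β⌋₊} := by
    simpa [Set.pi] using isClosed_set_pi (i := univ) (s := fun _ : ℕ => Iic ⌊β⌋₊)
      (fun _ _ => isClosed_discrete _)
  refine closure_minimal ?_ hclosed
  rintro _ ⟨x, hx, rfl⟩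
  exact bdigit_le_floor hβ hx

lemma shift_mem_betaShift {d : ℕ → ℕ} (hd : d ∈ betaShift β) (m : ℕ) :
    (fun n => d (n + m)) ∈ betaShift β := by
  refine map_mem_closure (f := fun (e : ℕ → ℕ) n => e (n + m))
    (continuous_pi fun n => continuous_apply (n + m)) hd ?_
  rintro _ ⟨x, hx, rfl⟩
  exact ⟨_, iterate_fbeta_mem_Ico β hx m, funext fun n => bdigit_add x m n⟩

lemma mem_betaShift_of_forall_exists {e : ℕ → ℕ}
    (he : ∀ k, ∃ g ∈ betaShift β, ∀ i < k, g i = e i) : e ∈ betaShift β := by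
  choose g hgS hge using he
  have hlim : Tendsto g atTop (𝓝 e) := by
    refine tendsto_pi_nhds.2 fun i => tendsto_const_nhds.congr' ?_
    filter_upwards [eventually_gt_atTop i] with k hk
    exact (hge k i hk).symm
  exact isClosed_closure.mem_of_tendsto hlim (Eventually.of_forall hgS)

lemma wordIn_iff_cylinder_nonempty {u : List ℕ} :
    wordIn β u ↔ (cylinder β u).Nonempty := by
  constructor
  · rintro ⟨d, hd, m, hocc⟩
    exact ⟨_, shift_mem_betaShift hd m, fun i hi => by rw [add_comm]; exact hocc i hi⟩
  · rintro ⟨d, hd, hpre⟩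
    exact ⟨d, hd, 0, fun i hi => by rw [zero_add]; exact hpre i hi⟩

end Shift

section PiBeta

variable {β : ℝ}

lemma summable_const_div_pow (hβ : 1 < β) (C : ℝ) : Summable fun k : ℕ => C / β ^ (k + 1) := by
  have hgeom := summable_geometric_of_lt_one (by positivity) (inv_lt_one_of_one_lt₀ hβ)
  simpa [div_eq_mul_inv, pow_succ, mul_assoc] using (hgeom.mul_left (C * β⁻¹))

lemma summable_digits_div_pow (hβ : 1 < β) {C : ℕ} {d : ℕ → ℕ} (hd : ∀ n, d n ≤ C) :
    Summable fun k => (d k : ℝ) / β ^ (k + 1) :=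
  (summable_const_div_pow hβ C).of_nonneg_of_le (fun k => by positivity)
    fun k => by gcongr; exact_mod_cast hd k

lemma continuousOn_piBeta (hβ : 1 < β) (C : ℕ) :
    ContinuousOn (piBeta β) {d | ∀ n, d n ≤ C} := by
  refine continuousOn_tsum (fun k => ?_) (summable_const_div_pow hβ C) fun k d hd => ?_
  · exact ((continuous_of_discreteTopology.comp (continuous_apply k)).div_const _).continuousOn
  · rw [Real.norm_of_nonneg (by positivity)]
    gcongr
    exact_mod_cast hd k

lemma Ico_subset_piBeta_image_betaShift (hβ : 1 < β) :
    Ico (0 : ℝ) 1 ⊆ piBeta β '' betaShift β :=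
  fun x hx => ⟨bdigit β x, subset_closure ⟨x, hx, rfl⟩, piBeta_bdigit hβ hx⟩

lemma piBeta_image_betaShift_subset_Icc (hβ : 1 < β) :
    piBeta β '' betaShift β ⊆ Icc (0 : ℝ) 1 := by
  have hcont : ContinuousOn (piBeta β) (betaShift β) :=
    (continuousOn_piBeta hβ _).mono (betaShift_subset_digits_le (one_pos.trans hβ).le)
  calc piBeta β '' betaShift β
      ⊆ closure (piBeta β '' {d | ∃ x ∈ Ico (0 : ℝ) 1, d = bdigit β x}) := hcont.image_closure
    _ ⊆ closure (Ico (0 : ℝ) 1) := by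
      refine closure_mono ?_
      rintro _ ⟨_, ⟨x, hx, rfl⟩, rfl⟩
      rwa [piBeta_bdigit hβ hx]
    _ = Icc (0 : ℝ) 1 := closure_Ico zero_ne_one

lemma len_piBeta_image_betaShift (hβ : 1 < β) : len (piBeta β '' betaShift β) = 1 := by
  have hle := measure_mono (μ := volume) (piBeta_image_betaShift_subset_Icc hβ)
  have hge := measure_mono (μ := volume) (Ico_subset_piBeta_image_betaShift hβ)
  rw [Real.volume_Icc] at hle
  rw [Real.volume_Ico] at hge
  have hvol : volume (piBeta β '' betaShift β) = 1 :=
    le_antisymm (by simpa using hle) (by simpa using hge)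
  rw [len, hvol, ENNReal.toReal_one]

lemma piBeta_eq_sum_add_shift (hβ : β ≠ 0) {d : ℕ → ℕ}
    (hd : Summable fun k => (d k : ℝ) / β ^ (k + 1)) (n : ℕ) :
    piBeta β d = ∑ k ∈ Finset.range n, (d k : ℝ) / β ^ (k + 1)
      + (β ^ n)⁻¹ * piBeta β (fun k => d (k + n)) := by
  rw [piBeta, piBeta, ← hd.sum_add_tsum_nat_add n, ← tsum_mul_left]
  congr 1
  refine tsum_congr fun k => ?_
  rw [show k + n + 1 = k + 1 + n by ring, pow_add]
  field_simp

end PiBeta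

section Cylinder

variable {β : ℝ}

lemma cylinder_nil : cylinder β [] = betaShift β :=
  sep_eq_self_iff_mem_true.2 fun _ _ i hi => absurd hi (Nat.not_lt_zero i)

def prependWord (w : List ℕ) (d : ℕ → ℕ) : ℕ → ℕ :=
  fun i => if i < w.length then w.getD i 0 else d (i - w.length)

lemma prependWord_add_length (w : List ℕ) (d : ℕ → ℕ) (k : ℕ) :
    prependWord w d (k + w.length) = d k := by
  simp [prependWord]

lemma prependWord_getD_append {w u : List ℕ} {d : ℕ → ℕ}
    (hd : ∀ j < u.length, d j = u.getD j 0) :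
    ∀ i < (w ++ u).length, prependWord w d i = (w ++ u).getD i 0 := by
  intro i hi
  rw [List.length_append] at hi
  unfold prependWord
  split_ifs with hiw
  · rw [List.getD_append _ _ _ _ hiw]
  · rw [List.getD_append_right _ _ _ _ (not_lt.1 hiw)]
    exact hd _ (by omega)

lemma shift_image_cylinder_append {w : List ℕ}
    (hext : ∀ v : List ℕ, wordIn β v → wordIn β (w ++ v)) (v : List ℕ) :
    (fun d k => d (k + w.length)) '' cylinder β (w ++ v) = cylinder β v := by
  refine Subset.antisymm ?_ fun d hd => ⟨prependWord w d,
    ⟨?_, prependWord_getD_append hd.2⟩, funext (prependWord_add_length w d)⟩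
  · rintro _ ⟨d, ⟨hdS, hpre⟩, rfl⟩
    refine ⟨shift_mem_betaShift hdS _, fun i hi => ?_⟩
    have hi' := hpre (i + w.length) (by rw [List.length_append]; omega)
    rwa [List.getD_append_right _ _ _ _ (by omega), Nat.add_sub_cancel] at hi'
  · refine mem_betaShift_of_forall_exists fun k => ?_
    set u := List.ofFn fun i : Fin k => d i
    have hu : ∀ j < u.length, d j = u.getD j 0 := fun j hj => by
      simp only [u, List.length_ofFn] at hj
      simp [u, hj]
    obtain ⟨g, hgS, hg⟩ := wordIn_iff_cylinder_nonempty.1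
      (hext u (wordIn_iff_cylinder_nonempty.2 ⟨d, hd.1, hu⟩))
    have hlen : k ≤ (w ++ u).length := by simp [u]
    exact ⟨g, hgS, fun i hi =>
      (hg i (by omega)).trans (prependWord_getD_append hu i (by omega)).symm⟩

lemma piBeta_image_cylinder_append (hβ : 1 < β) {w : List ℕ}
    (hext : ∀ v : List ℕ, wordIn β v → wordIn β (w ++ v)) (v : List ℕ) :
    piBeta β '' cylinder β (w ++ v) =
      (fun y => ∑ k ∈ Finset.range w.length, (w.getD k 0 : ℝ) / β ^ (k + 1)
        + (β ^ w.length)⁻¹ * y) '' (piBeta β '' cylinder β v) := by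
  rw [← shift_image_cylinder_append hext v, image_image, image_image]
  refine image_congr fun d ⟨hdS, hpre⟩ => ?_
  have hsum := summable_digits_div_pow hβ (betaShift_subset_digits_le (one_pos.trans hβ).le hdS)
  rw [piBeta_eq_sum_add_shift (one_pos.trans hβ).ne' hsum w.length]
  congr 1
  refine Finset.sum_congr rfl fun k hk => ?_
  have hk : k < w.length := Finset.mem_range.1 hk
  rw [hpre k (by rw [List.length_append]; omega), List.getD_append _ _ _ _ hk]

end Cylinder

open scoped Pointwise in
lemma len_image_add_mul (c r : ℝ) (A : Set ℝ) :
    len ((fun y => c + r * y) '' A) = |r| * len A := by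
  have himage : (fun y => c + r * y) '' A = c +ᵥ r • A := by
    rw [← image_smul, ← image_vadd, image_image]
    rfl
  rw [len, len, himage, measure_vadd, Measure.addHaar_smul, Module.finrank_self, pow_one,
    ENNReal.toReal_mul, ENNReal.toReal_ofReal (abs_nonneg r)]

theorem cylinder_scaling_general (β : ℝ) (hβ : 1 < β) (w : List ℕ)
    (hext : ∀ v : List ℕ, wordIn β v → wordIn β (w ++ v)) :
    len (piBeta β '' cylinder β w) = (β ^ w.length)⁻¹ ∧
      ∀ v : List ℕ, wordIn β v →
        len (piBeta β '' cylinder β (w ++ v)) =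
          (β ^ w.length)⁻¹ * len (piBeta β '' cylinder β v) := by
  have hscale : ∀ v : List ℕ, len (piBeta β '' cylinder β (w ++ v)) =
      (β ^ w.length)⁻¹ * len (piBeta β '' cylinder β v) := fun v => by
    rw [piBeta_image_cylinder_append hβ hext v, len_image_add_mul,
      abs_of_pos (by positivity)]
  refine ⟨?_, fun v _ => hscale v⟩
  simpa [cylinder_nil, len_piBeta_image_betaShift hβ] using hscale []

/-- scaling lemma: if `w ∈ S_β^*` can be followed by any word of
`S_β^*`, then `|π_β([w])| = β^{-|w|}`, and `|π_β([w v])| = β^{-|w|} |π_β([v])|` for all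
`v ∈ S_β^*`. -/
theorem cylinder_scaling (β : ℝ) (hβ : 1 < β) (w : List ℕ) (hw : w ≠ [])
    (hw1 : wordIn β w) (hext : ∀ v : List ℕ, wordIn β v → wordIn β (w ++ v)) :
    len (piBeta β '' cylinder β w) = (β ^ w.length)⁻¹ ∧
      ∀ v : List ℕ, wordIn β v →
        len (piBeta β '' cylinder β (w ++ v)) =
          (β ^ w.length)⁻¹ * len (piBeta β '' cylinder β v) :=
  cylinder_scaling_general β hβ w hext
end
end

section
/- Let β > 1 be such that d(1,β) has only finitely many nonzero digits (so S_β is a subshift of finite type). Then there exists a constant C > 0 such that for every finite word i_0 … i_{n−1} ∈ S_β^*, C β^{−n} ≤ |π_β([i_0 … i_{n−1}])| ≤ β^{−n}. -/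
open Set MeasureTheory Filter Topology

noncomputable section

/-!
Write `f = f_β`. Every `d ∈ S_β` satisfies `π_β d = ∑_{k<n} d_k β^{-(k+1)} + β^{-n} π_β(σ^n d)` with
`π_β(σ^n d) ∈ [0,1]`, so `π_β([w])` lies in an interval of length `β^{-n}`. Conversely, if `x` has
`w` as its first `n` digits, the points sharing these digits are exactly those `y` with
`f^n y ∈ [0, E_n)`, where `E_0 = 1`, `E_{k+1} = min 1 (β E_k - d_k(x))`; hence `π_β([w])` contains
an interval of length `E_n β^{-n}`. Each `E_n` is a positive point of the orbit of `1` under `f`, and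
when `d(1,β)` is finite this orbit reaches `0`, so it has only finitely many positive points and
`E_n` is bounded below by the least of them.
-/

namespace BetaExpansion

variable {β x : ℝ}

lemma len_le_of_subset_Icc {s : Set ℝ} {a b : ℝ} (h : s ⊆ Icc a b) (hab : a ≤ b) :
    len s ≤ b - a :=
  ENNReal.toReal_le_of_le_ofReal (by linarith) ((measure_mono h).trans_eq Real.volume_Icc)

lemma le_len_of_Ico_subset {s : Set ℝ} {a b : ℝ} (h : Ico a b ⊆ s)
    (hs : Bornology.IsBounded s) : b - a ≤ len s :=
  (ENNReal.ofReal_le_iff_le_toReal hs.measure_lt_top.ne).1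
    (Real.volume_Ico.symm.trans_le (measure_mono h))

lemma fbeta_mem_Ico (β x : ℝ) : fbeta β x ∈ Ico (0 : ℝ) 1 :=
  ⟨Int.fract_nonneg _, Int.fract_lt_one _⟩

lemma fbeta_iterate_mem_Ico (hx : x ∈ Ico (0 : ℝ) 1) (n : ℕ) : (fbeta β)^[n] x ∈ Ico (0 : ℝ) 1 := by
  cases n with
  | zero => exact hx
  | succ n => rw [Function.iterate_succ_apply']; exact fbeta_mem_Ico _ _

lemma fbeta_iterate_succ_one_mem_Ico (n : ℕ) : (fbeta β)^[n + 1] 1 ∈ Ico (0 : ℝ) 1 := by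
  rw [Function.iterate_succ_apply']; exact fbeta_mem_Ico _ _

lemma fbeta_iterate_nonneg (hx : 0 ≤ x) (n : ℕ) : 0 ≤ (fbeta β)^[n] x := by
  cases n with
  | zero => exact hx
  | succ n => rw [Function.iterate_succ_apply']; exact Int.fract_nonneg _

lemma bdigit_cast (hβ : 0 ≤ β) (hx : 0 ≤ x) (n : ℕ) :
    (bdigit β x n : ℝ) = ⌊β * (fbeta β)^[n] x⌋ := by
  have : (0 : ℤ) ≤ ⌊β * (fbeta β)^[n] x⌋ :=
    Int.floor_nonneg.2 (mul_nonneg hβ (fbeta_iterate_nonneg hx n))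
  rw [bdigit]
  exact_mod_cast Int.toNat_of_nonneg this

lemma fbeta_iterate_succ (hβ : 0 ≤ β) (hx : 0 ≤ x) (n : ℕ) :
    (fbeta β)^[n + 1] x = β * (fbeta β)^[n] x - bdigit β x n := by
  rw [Function.iterate_succ_apply', fbeta, Int.fract, bdigit_cast hβ hx]

lemma bdigit_lt (hβ : 0 < β) (hx : x ∈ Ico (0 : ℝ) 1) (n : ℕ) : (bdigit β x n : ℝ) < β := by
  have h := (fbeta_iterate_mem_Ico (β := β) hx n).2
  rw [bdigit_cast hβ.le hx.1]
  calc (⌊β * (fbeta β)^[n] x⌋ : ℝ) ≤ β * (fbeta β)^[n] x := Int.floor_le _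
    _ < β := by nlinarith

lemma bdigit_eq_and_fbeta_iterate_succ {y t : ℝ} {d n : ℕ}
    (h : β * (fbeta β)^[n] y = d + t) (ht : t ∈ Ico (0 : ℝ) 1) :
    bdigit β y n = d ∧ (fbeta β)^[n + 1] y = t := by
  have hfloor : ⌊β * (fbeta β)^[n] y⌋ = d := by
    rw [h, Int.floor_natCast_add, Int.floor_eq_zero_iff.2 ht, add_zero]
  refine ⟨by rw [bdigit, hfloor, Int.toNat_natCast], ?_⟩
  rw [Function.iterate_succ_apply', fbeta, h, Int.fract_natCast_add, Int.fract_eq_self.2 ht]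

lemma eq_sum_add_fbeta_iterate_div (hβ : 0 < β) (hx : x ∈ Ico (0 : ℝ) 1) (n : ℕ) :
    x = ∑ k ∈ Finset.range n, (bdigit β x k : ℝ) / β ^ (k + 1) + (fbeta β)^[n] x / β ^ n := by
  induction n with
  | zero => simp
  | succ n ih =>
    rw [Finset.sum_range_succ, fbeta_iterate_succ hβ.le hx.1 n]
    have : (β * (fbeta β)^[n] x - bdigit β x n) / β ^ (n + 1)
        = (fbeta β)^[n] x / β ^ n - (bdigit β x n : ℝ) / β ^ (n + 1) := by
      field_simp
      ring
    linarith

def digitsLt (β : ℝ) : Set (ℕ → ℕ) := {d | ∀ k, (d k : ℝ) < β}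

lemma isClosed_digitsLt : IsClosed (digitsLt β) := by
  have : digitsLt β = ⋂ k, (fun d : ℕ → ℕ ↦ d k) ⁻¹' {m | (m : ℝ) < β} := by
    ext d; simp [digitsLt]
  rw [this]
  exact isClosed_iInter fun k ↦ (isClosed_discrete _).preimage (continuous_apply k)

lemma bdigit_mem_digitsLt (hβ : 0 < β) (hx : x ∈ Ico (0 : ℝ) 1) : bdigit β x ∈ digitsLt β :=
  bdigit_lt hβ hx

lemma betaShift_subset_digitsLt (hβ : 0 < β) : betaShift β ⊆ digitsLt β :=
  closure_minimal (by rintro d ⟨y, hy, rfl⟩; exact bdigit_mem_digitsLt hβ hy) isClosed_digitsLt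

lemma summable_div_pow_succ (hβ : 1 < β) : Summable fun k : ℕ ↦ β / β ^ (k + 1) := by
  have hβ0 : 0 < β := by linarith
  have : (fun k : ℕ ↦ β / β ^ (k + 1)) = fun k ↦ β⁻¹ ^ k := by
    funext k
    rw [pow_succ', ← div_div, div_self hβ0.ne', one_div, inv_pow]
  rw [this]
  exact summable_geometric_of_lt_one (by positivity) (inv_lt_one_of_one_lt₀ hβ)

lemma digit_div_pow_le {d : ℕ → ℕ} (hβ : 0 < β) (hd : d ∈ digitsLt β) (k : ℕ) :
    (d k : ℝ) / β ^ (k + 1) ≤ β / β ^ (k + 1) := by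
  gcongr
  exact (hd k).le

lemma summable_digit_div_pow {d : ℕ → ℕ} (hβ : 1 < β) (hd : d ∈ digitsLt β) :
    Summable fun k ↦ (d k : ℝ) / β ^ (k + 1) :=
  (summable_div_pow_succ hβ).of_nonneg_of_le (fun _ ↦ by positivity)
    (digit_div_pow_le (by linarith) hd)

lemma continuousOn_piBeta (hβ : 1 < β) : ContinuousOn (piBeta β) (digitsLt β) := by
  refine continuousOn_tsum (fun k ↦ Continuous.continuousOn ?_) (summable_div_pow_succ hβ)
    fun k d hd ↦ ?_
  · exact (continuous_of_discreteTopology.comp (continuous_apply k)).div_const _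
  · rw [Real.norm_eq_abs, abs_of_nonneg (by positivity)]
    exact digit_div_pow_le (by linarith) hd k

lemma piBeta_bdigit (hβ : 1 < β) (hx : x ∈ Ico (0 : ℝ) 1) : piBeta β (bdigit β x) = x := by
  have hβ0 : 0 < β := by linarith
  have hrem : Tendsto (fun n : ℕ ↦ (fbeta β)^[n] x / β ^ n) atTop (𝓝 0) := by
    refine squeeze_zero (fun n ↦ div_nonneg (fbeta_iterate_mem_Ico hx n).1 (by positivity))
      (fun n ↦ ?_) (tendsto_pow_atTop_nhds_zero_of_lt_one (by positivity)
        (inv_lt_one_of_one_lt₀ hβ))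
    rw [inv_pow, ← one_div]
    exact div_le_div_of_nonneg_right (fbeta_iterate_mem_Ico hx n).2.le (by positivity)
  have hpartial : Tendsto (fun n ↦ ∑ k ∈ Finset.range n, (bdigit β x k : ℝ) / β ^ (k + 1))
      atTop (𝓝 x) := by
    simpa using (tendsto_const_nhds (x := x)).sub hrem |>.congr fun n ↦
      (eq_sub_of_add_eq (eq_sum_add_fbeta_iterate_div hβ0 hx n).symm).symm
  exact tendsto_nhds_unique
    (summable_digit_div_pow hβ (bdigit_mem_digitsLt hβ0 hx)).hasSum.tendsto_sum_nat hpartial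

lemma piBeta_mem_Icc (hβ : 1 < β) {d : ℕ → ℕ} (hd : d ∈ betaShift β) :
    piBeta β d ∈ Icc (0 : ℝ) 1 := by
  have hβ0 : 0 < β := by linarith
  have hsub : betaShift β ⊆ digitsLt β ∩ piBeta β ⁻¹' Icc 0 1 := by
    refine closure_minimal ?_
      ((continuousOn_piBeta hβ).preimage_isClosed_of_isClosed isClosed_digitsLt isClosed_Icc)
    rintro e ⟨y, hy, rfl⟩
    refine ⟨bdigit_mem_digitsLt hβ0 hy, ?_⟩
    rw [mem_preimage, piBeta_bdigit hβ hy]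
    exact Ico_subset_Icc_self hy
  exact (hsub hd).2

def shift (n : ℕ) (d : ℕ → ℕ) : ℕ → ℕ := fun j ↦ d (n + j)

lemma shift_bdigit (n : ℕ) : shift n (bdigit β x) = bdigit β ((fbeta β)^[n] x) := by
  funext j
  simp only [shift, bdigit]
  rw [add_comm n j, Function.iterate_add_apply]

lemma shift_mem_betaShift (n : ℕ) {d : ℕ → ℕ} (hd : d ∈ betaShift β) :
    shift n d ∈ betaShift β := by
  have hc : Continuous (shift n) := continuous_pi fun j ↦ continuous_apply (n + j)
  refine closure_mono ?_ (image_closure_subset_closure_image hc (mem_image_of_mem _ hd))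
  rintro e ⟨e', ⟨y, hy, rfl⟩, rfl⟩
  exact ⟨(fbeta β)^[n] y, fbeta_iterate_mem_Ico hy n, shift_bdigit n⟩

lemma piBeta_eq_sum_add_shift (hβ : 1 < β) {d : ℕ → ℕ} (hd : d ∈ digitsLt β) (n : ℕ) :
    piBeta β d = ∑ k ∈ Finset.range n, (d k : ℝ) / β ^ (k + 1)
      + (β ^ n)⁻¹ * piBeta β (shift n d) := by
  rw [piBeta, ← (summable_digit_div_pow hβ hd).sum_add_tsum_nat_add n, piBeta, ← tsum_mul_left]
  congr 1
  refine tsum_congr fun j ↦ ?_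
  rw [shift, add_comm n j, show j + n + 1 = j + 1 + n by omega, pow_add, ← div_div,
    div_eq_mul_inv _ (β ^ n), mul_comm]

def wordValue (β : ℝ) (w : List ℕ) : ℝ :=
  ∑ k ∈ Finset.range w.length, (w.getD k 0 : ℝ) / β ^ (k + 1)

lemma sum_eq_wordValue {w : List ℕ} {d : ℕ → ℕ} (hd : ∀ i < w.length, d i = w.getD i 0) :
    ∑ k ∈ Finset.range w.length, (d k : ℝ) / β ^ (k + 1) = wordValue β w :=
  Finset.sum_congr rfl fun k hk ↦ by rw [hd k (Finset.mem_range.1 hk)]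

lemma piBeta_image_cylinder_subset (hβ : 1 < β) (w : List ℕ) :
    piBeta β '' cylinder β w ⊆ Icc (wordValue β w) (wordValue β w + (β ^ w.length)⁻¹) := by
  rintro _ ⟨d, ⟨hdS, hdw⟩, rfl⟩
  have htail := piBeta_mem_Icc hβ (shift_mem_betaShift w.length hdS)
  have hpow : 0 < (β ^ w.length)⁻¹ := by positivity
  rw [piBeta_eq_sum_add_shift hβ (betaShift_subset_digitsLt (by linarith) hdS) w.length,
    sum_eq_wordValue hdw]
  constructor <;> nlinarith [htail.1, htail.2]

lemma exists_bdigit_eq_of_wordIn {w : List ℕ} (hw : wordIn β w) :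
    ∃ x ∈ Ico (0 : ℝ) 1, ∀ i < w.length, bdigit β x i = w.getD i 0 := by
  obtain ⟨d, hd, m, hm⟩ := hw
  have hopen : IsOpen {e : ℕ → ℕ | ∀ i < w.length, e (m + i) = w.getD i 0} := by
    simp only [← Finset.mem_range, ofPred_forall]
    exact isOpen_biInter_finset fun i _ ↦
      (continuous_apply (A := fun _ ↦ ℕ) (m + i)).isOpen_preimage {w.getD i 0}
        (isOpen_discrete _)
  obtain ⟨_, he, x, hx, rfl⟩ := mem_closure_iff.1 hd _ hopen hm
  refine ⟨(fbeta β)^[m] x, fbeta_iterate_mem_Ico hx m, fun i hi ↦ ?_⟩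
  rw [← he i hi, ← shift_bdigit, shift]

def tailBound (β x : ℝ) : ℕ → ℝ
  | 0 => 1
  | n + 1 => min 1 (β * tailBound β x n - bdigit β x n)

lemma fbeta_iterate_lt_tailBound (hβ : 0 < β) (hx : x ∈ Ico (0 : ℝ) 1) (n : ℕ) :
    (fbeta β)^[n] x < tailBound β x n := by
  induction n with
  | zero => exact hx.2
  | succ n ih =>
    refine lt_min (fbeta_iterate_mem_Ico hx (n + 1)).2 ?_
    rw [fbeta_iterate_succ hβ.le hx.1 n]
    nlinarith

lemma tailBound_pos (hβ : 0 < β) (hx : x ∈ Ico (0 : ℝ) 1) (n : ℕ) : 0 < tailBound β x n :=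
  (fbeta_iterate_mem_Ico hx n).1.trans_lt (fbeta_iterate_lt_tailBound hβ hx n)

lemma exists_bdigit_eq_of_lt_tailBound (hβ : 0 < β) (n : ℕ) {t : ℝ} (ht : 0 ≤ t)
    (htE : t < tailBound β x n) :
    ∃ y ∈ Ico (0 : ℝ) 1, (∀ k < n, bdigit β y k = bdigit β x k) ∧ (fbeta β)^[n] y = t := by
  induction n generalizing t with
  | zero => exact ⟨t, ⟨ht, htE⟩, by simp, rfl⟩
  | succ n ih =>
    obtain ⟨ht1, htE⟩ := lt_min_iff.1 htE
    obtain ⟨y, hy, hpre, hyt⟩ := ih (t := (bdigit β x n + t) / β) (by positivity)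
      (by rw [div_lt_iff₀ hβ]; linarith)
    obtain ⟨hdigit, hnext⟩ := bdigit_eq_and_fbeta_iterate_succ (y := y)
      (by rw [hyt, mul_div_cancel₀ _ hβ.ne']) ⟨ht, ht1⟩
    refine ⟨y, hy, fun k hk ↦ ?_, hnext⟩
    rcases Nat.lt_succ_iff_lt_or_eq.1 hk with hk | rfl
    exacts [hpre k hk, hdigit]

lemma tailBound_mem_orbit_one (hβ : 0 < β) (hx : x ∈ Ico (0 : ℝ) 1) (n : ℕ) :
    ∃ k, tailBound β x n = (fbeta β)^[k] 1 := by
  induction n with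
  | zero => exact ⟨0, rfl⟩
  | succ n ih =>
    obtain ⟨k, hk⟩ := ih
    have hpos := tailBound_pos hβ hx (n + 1)
    simp only [tailBound, hk, lt_min_iff] at hpos ⊢
    by_cases h1 : 1 ≤ β * (fbeta β)^[k] 1 - bdigit β x n
    · exact ⟨0, min_eq_left h1⟩
    · refine ⟨k + 1, ?_⟩
      have hrem : β * (fbeta β)^[k] 1 - bdigit β x n ∈ Ico (0 : ℝ) 1 := ⟨hpos.2.le, by linarith⟩
      rw [(bdigit_eq_and_fbeta_iterate_succ (by ring) hrem).2, min_eq_right hrem.2.le]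

lemma Ico_subset_piBeta_image_cylinder (hβ : 1 < β) {w : List ℕ}
    (hxw : ∀ i < w.length, bdigit β x i = w.getD i 0) :
    Ico (wordValue β w) (wordValue β w + tailBound β x w.length * (β ^ w.length)⁻¹) ⊆
      piBeta β '' cylinder β w := by
  rintro z ⟨hz, hzE⟩
  have hβ0 : 0 < β := by linarith
  have hpow : 0 < β ^ w.length := by positivity
  obtain ⟨y, hy, hyx, hyt⟩ := exists_bdigit_eq_of_lt_tailBound hβ0 w.length
    (t := (z - wordValue β w) * β ^ w.length) (mul_nonneg (by linarith) hpow.le)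
    (by rwa [← lt_div_iff₀ hpow, sub_lt_iff_lt_add', div_eq_mul_inv])
  have hyw : ∀ i < w.length, bdigit β y i = w.getD i 0 := fun i hi ↦ (hyx i hi).trans (hxw i hi)
  refine ⟨bdigit β y, ⟨subset_closure ⟨y, hy, rfl⟩, hyw⟩, ?_⟩
  rw [piBeta_bdigit hβ hy, eq_sum_add_fbeta_iterate_div hβ0 hy w.length, sum_eq_wordValue hyw,
    hyt]
  field_simp
  ring

lemma exists_fbeta_iterate_one_eq_zero (hβ : 1 < β) (hft : betaShiftFiniteType β) :
    ∃ N, (fbeta β)^[N] 1 = 0 := by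
  obtain ⟨N, hN⟩ := hft
  -- past `N` the digits vanish, so `f` acts as multiplication by `β`
  have hgrow : ∀ k, (fbeta β)^[N + 1 + k] 1 = β ^ k * (fbeta β)^[N + 1] 1 := by
    intro k
    induction k with
    | zero => simp
    | succ k ih =>
      rw [← add_assoc, fbeta_iterate_succ (by linarith) zero_le_one, hN _ (by omega), ih]
      push_cast
      ring
  refine ⟨N + 1, ?_⟩
  have ha := fbeta_iterate_succ_one_mem_Ico (β := β) N
  by_contra hne
  obtain ⟨k, hk⟩ := pow_unbounded_of_one_lt ((fbeta β)^[N + 1] 1)⁻¹ hβ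
  rw [inv_lt_iff_one_lt_mul₀ (lt_of_le_of_ne ha.1 (Ne.symm hne))] at hk
  have hlt := (fbeta_iterate_succ_one_mem_Ico (β := β) (N + k)).2
  rw [show N + k + 1 = N + 1 + k by omega, hgrow] at hlt
  linarith

lemma exists_pos_le_fbeta_iterate_one (hβ : 1 < β) (hft : betaShiftFiniteType β) :
    ∃ c > 0, ∀ k, 0 < (fbeta β)^[k] 1 → c ≤ (fbeta β)^[k] 1 := by
  obtain ⟨N, hN⟩ := exists_fbeta_iterate_one_eq_zero hβ hft
  have hzero : ∀ k, N ≤ k → (fbeta β)^[k] 1 = 0 := fun k hk ↦ by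
    rw [← Nat.sub_add_cancel hk, Function.iterate_add_apply, hN]
    exact Function.iterate_fixed (by simp [fbeta]) _
  obtain ⟨k₀, ⟨-, hk₀⟩, hmin⟩ := Set.exists_min_image {k | k ≤ N ∧ 0 < (fbeta β)^[k] 1}
    (fun k ↦ (fbeta β)^[k] 1) ((Set.finite_Iic N).subset fun k hk ↦ hk.1) ⟨0, by simp⟩
  refine ⟨_, hk₀, fun k hk ↦ hmin k ⟨?_, hk⟩⟩
  by_contra! hNk
  exact hk.ne' (hzero k hNk.le)

end BetaExpansion

open BetaExpansion

/-- if `S_β` is of finite type then cylinder lengths satisfy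
`C β^{-n} ≤ |π_β([i_0 … i_{n-1}])| ≤ β^{-n}` for some `C > 0`. -/
theorem sft_cylinder_bounds (β : ℝ) (hβ : 1 < β) (hft : betaShiftFiniteType β) :
    ∃ C > 0, ∀ w : List ℕ, wordIn β w →
      C * (β ^ w.length)⁻¹ ≤ len (piBeta β '' cylinder β w) ∧
        len (piBeta β '' cylinder β w) ≤ (β ^ w.length)⁻¹ := by
  have hβ0 : 0 < β := by linarith
  obtain ⟨c, hc, hc_le⟩ := exists_pos_le_fbeta_iterate_one hβ hft
  refine ⟨c, hc, fun w hw ↦ ?_⟩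
  obtain ⟨x, hx, hxw⟩ := exists_bdigit_eq_of_wordIn hw
  have hcE : c ≤ tailBound β x w.length := by
    obtain ⟨k, hk⟩ := tailBound_mem_orbit_one hβ0 hx w.length
    exact hk ▸ hc_le k (hk ▸ tailBound_pos hβ0 hx w.length)
  have hsub := piBeta_image_cylinder_subset hβ w
  constructor
  · have hlower := le_len_of_Ico_subset (b := wordValue β w + c * (β ^ w.length)⁻¹)
      ((Ico_subset_Ico_right (by gcongr)).trans (Ico_subset_piBeta_image_cylinder hβ hxw))
      (Metric.isBounded_Icc _ _ |>.subset hsub)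
    rwa [add_sub_cancel_left] at hlower
  · simpa using len_le_of_subset_Icc hsub (by simp [hβ0.le])
end
end
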